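/- Let k ≥ 1 be an integer, let (r_m) be a sequence of positive reals with r_m/m → 1, and let t ≥ 0. Let R_{m} be the minimum of m i.i.d. Gamma(k,1) random variables, and let M(m, u) be distributed as R_m conditioned on R_m > u. Then r_m^{1/k} · M(m, t·r_m^{-1/k}) converges in distribution as m → ∞ to (t^k + k!·E)^{1/k}, where E ~ Exp(1). Equivalently, for every fixed x ≥ t, P(r_m^{1/k} M(m, t r_m^{-1/k}) > x) → exp(-(x^k - t^k)/k!). -/

import Mathlib

/-!
For `u ≥ 0`, `Γ(n+1, u) = n! - ∫₀ᵘ sⁿ e⁻ˢ ds`, and the integral lies between `e⁻ᵘ uⁿ⁺¹/(n+1)`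
and `uⁿ⁺¹/(n+1)`; hence `1 - Γ(n+1, u)/n! ~ uⁿ⁺¹/(n+1)!` as `u → 0`. Taking
`u = a r_m^{-1/k}` with `m / r_m → 1`, the survival function `(Γ(k, u)/(k-1)!)ᵐ` of the minimum
is `(1 - aᵏ/(k! m) + o(1/m))ᵐ → exp(-aᵏ/k!)`, and the claim is the quotient of these limits at
`a = x` and `a = t`.
-/

open MeasureTheory Real Set Filter
open scoped Nat Topology

/-- The upper incomplete gamma function `Γ(k,x) = ∫_x^∞ t^{k-1} e^{-t} dt`. -/
noncomputable def upperGamma (k : ℕ) (x : ℝ) : ℝ :=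
  ∫ t in Set.Ioi x, t ^ (k - 1) * Real.exp (-t)

theorem integrableOn_Ioi_pow_mul_exp_neg (n : ℕ) :
    IntegrableOn (fun s : ℝ => s ^ n * exp (-s)) (Ioi 0) := by
  refine (GammaIntegral_convergent (s := n + 1) (by positivity)).congr_fun (fun s _ => ?_)
    measurableSet_Ioi
  simp only [add_sub_cancel_right, rpow_natCast, mul_comm]

theorem integral_Ioi_pow_mul_exp_neg (n : ℕ) :
    ∫ s in Ioi (0 : ℝ), s ^ n * exp (-s) = n ! := by
  rw [← Gamma_nat_eq_factorial, Gamma_eq_integral (by positivity)]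
  refine setIntegral_congr_fun measurableSet_Ioi fun s _ => ?_
  rw [add_sub_cancel_right, rpow_natCast, mul_comm]

theorem upperGamma_succ_eq_factorial_sub (n : ℕ) {u : ℝ} (hu : 0 ≤ u) :
    upperGamma (n + 1) u = (n ! : ℝ) - ∫ s in (0)..u, s ^ n * exp (-s) := by
  rw [← integral_Ioi_pow_mul_exp_neg,
    ← intervalIntegral.integral_Ioi_sub_Ioi (integrableOn_Ioi_pow_mul_exp_neg n) hu, upperGamma,
    Nat.add_sub_cancel, sub_sub_cancel]

theorem integral_pow_mul_exp_neg_le (n : ℕ) {u : ℝ} (hu : 0 ≤ u) :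
    ∫ s in (0)..u, s ^ n * exp (-s) ≤ u ^ (n + 1) / (n + 1) := by
  calc ∫ s in (0)..u, s ^ n * exp (-s) ≤ ∫ s in (0)..u, s ^ n := by
        refine intervalIntegral.integral_mono_on hu
          ((by fun_prop : Continuous _).intervalIntegrable _ _)
          ((by fun_prop : Continuous _).intervalIntegrable _ _) fun s hs => ?_
        exact mul_le_of_le_one_right (pow_nonneg hs.1 n) (exp_le_one_iff.2 (by linarith [hs.1]))
    _ = u ^ (n + 1) / (n + 1) := by simp [integral_pow]

theorem exp_neg_mul_le_integral_pow_mul_exp_neg (n : ℕ) {u : ℝ} (hu : 0 ≤ u) :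
    exp (-u) * (u ^ (n + 1) / (n + 1)) ≤ ∫ s in (0)..u, s ^ n * exp (-s) := by
  calc exp (-u) * (u ^ (n + 1) / (n + 1)) = ∫ s in (0)..u, s ^ n * exp (-u) := by
        simp [integral_pow, mul_comm]
    _ ≤ ∫ s in (0)..u, s ^ n * exp (-s) := by
        refine intervalIntegral.integral_mono_on hu
          ((by fun_prop : Continuous _).intervalIntegrable _ _)
          ((by fun_prop : Continuous _).intervalIntegrable _ _) fun s hs => ?_
        exact mul_le_mul_of_nonneg_left (exp_le_exp.2 (neg_le_neg hs.2)) (pow_nonneg hs.1 n)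

theorem tendsto_mul_integral_pow_mul_exp_neg (n : ℕ) {u : ℕ → ℝ} {c : ℝ}
    (hu_nonneg : ∀ m, 0 ≤ u m) (hu : Tendsto u atTop (𝓝 0))
    (hc : Tendsto (fun m : ℕ => m * u m ^ (n + 1)) atTop (𝓝 c)) :
    Tendsto (fun m : ℕ => m * ∫ s in (0)..u m, s ^ n * exp (-s)) atTop (𝓝 (c / (n + 1))) := by
  have hupper := hc.div_const ((n : ℝ) + 1)
  have hlower : Tendsto (fun m => exp (-u m) * (m * u m ^ (n + 1) / (n + 1))) atTop
      (𝓝 (c / (n + 1))) := by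
    simpa using ((continuous_exp.comp continuous_neg).tendsto 0).comp hu |>.mul hupper
  refine tendsto_of_tendsto_of_tendsto_of_le_of_le hlower hupper (fun m => ?_) (fun m => ?_)
  · have hle := exp_neg_mul_le_integral_pow_mul_exp_neg n (hu_nonneg m)
    calc exp (-u m) * (m * u m ^ (n + 1) / (n + 1))
        = m * (exp (-u m) * (u m ^ (n + 1) / (n + 1))) := by ring
      _ ≤ _ := mul_le_mul_of_nonneg_left hle m.cast_nonneg
  · have hle := integral_pow_mul_exp_neg_le n (hu_nonneg m)
    calc m * ∫ s in (0)..u m, s ^ n * exp (-s) ≤ m * (u m ^ (n + 1) / (n + 1)) :=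
        mul_le_mul_of_nonneg_left hle m.cast_nonneg
      _ = _ := by ring

theorem tendsto_mul_upperGamma_succ_div_factorial_sub_one (n : ℕ) {u : ℕ → ℝ} {c : ℝ}
    (hu_nonneg : ∀ m, 0 ≤ u m) (hu : Tendsto u atTop (𝓝 0))
    (hc : Tendsto (fun m : ℕ => m * u m ^ (n + 1)) atTop (𝓝 c)) :
    Tendsto (fun m : ℕ => m * (upperGamma (n + 1) (u m) / (n ! : ℝ) - 1)) atTop
      (𝓝 (-(c / ((n + 1)! : ℝ)))) := by
  have hfac : (n ! : ℝ) ≠ 0 := by positivity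
  have hlim := (tendsto_mul_integral_pow_mul_exp_neg n hu_nonneg hu hc).neg.div_const (n ! : ℝ)
  rw [Nat.factorial_succ, Nat.cast_mul, Nat.cast_succ, ← div_div, ← neg_div]
  refine hlim.congr fun m => ?_
  rw [upperGamma_succ_eq_factorial_sub n (hu_nonneg m)]
  field_simp
  ring

theorem tendsto_upperGamma_succ_div_factorial_pow (n : ℕ) {ε : ℕ → ℝ} (hε_nonneg : ∀ m, 0 ≤ ε m)
    (hε : Tendsto ε atTop (𝓝 0)) (hmε : Tendsto (fun m : ℕ => m * ε m ^ (n + 1)) atTop (𝓝 1))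
    {a : ℝ} (ha : 0 ≤ a) :
    Tendsto (fun m : ℕ => (upperGamma (n + 1) (a * ε m) / (n ! : ℝ)) ^ m) atTop
      (𝓝 (exp (-(a ^ (n + 1) / ((n + 1)! : ℝ))))) := by
  have hmaε : Tendsto (fun m : ℕ => m * (a * ε m) ^ (n + 1)) atTop (𝓝 (a ^ (n + 1))) := by
    simpa [mul_pow, mul_left_comm] using hmε.const_mul (a ^ (n + 1))
  have h := tendsto_mul_upperGamma_succ_div_factorial_sub_one n
    (fun m => mul_nonneg ha (hε_nonneg m)) (by simpa using hε.const_mul a) hmaε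
  simpa using Real.tendsto_one_add_pow_exp_of_tendsto h

theorem rpow_neg_one_div_natCast_pow {r : ℝ} (hr : 0 ≤ r) {k : ℕ} (hk : k ≠ 0) :
    (r ^ (-(1 : ℝ) / k)) ^ k = r⁻¹ := by
  rw [neg_div, rpow_neg hr, inv_pow, one_div, rpow_inv_natCast_pow hr hk]

theorem tendsto_rpow_neg_one_div_natCast {r : ℕ → ℝ}
    (hlim : Tendsto (fun m : ℕ => r m / m) atTop (𝓝 1)) {k : ℕ} (hk : k ≠ 0) :
    Tendsto (fun m => r m ^ (-(1 : ℝ) / k)) atTop (𝓝 0) := by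
  have hr_top : Tendsto r atTop atTop := by
    refine (hlim.pos_mul_atTop one_pos tendsto_natCast_atTop_atTop).congr' ?_
    filter_upwards [eventually_ne_atTop 0] with m hm
    field_simp
  simpa [neg_div, Function.comp_def] using
    (tendsto_rpow_neg_atTop (y := 1 / k) (by positivity)).comp hr_top

theorem tendsto_natCast_mul_rpow_neg_one_div_natCast_pow {r : ℕ → ℝ} (hr : ∀ m, 0 < r m)
    (hlim : Tendsto (fun m : ℕ => r m / m) atTop (𝓝 1)) {k : ℕ} (hk : k ≠ 0) :
    Tendsto (fun m : ℕ => m * (r m ^ (-(1 : ℝ) / k)) ^ k) atTop (𝓝 1) := by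
  have h := hlim.inv₀ one_ne_zero
  rw [inv_one] at h
  refine h.congr fun m => ?_
  rw [rpow_neg_one_div_natCast_pow (hr m).le hk, inv_div, div_eq_mul_inv]

/-- `(Γ(k,x)/(k-1)!)ᵐ = P(R_m > x)`, so the quotient is the survival function of
`r_m^{1/k} M(m, t r_m^{-1/k})` at `x`. -/
theorem stmt11 (k : ℕ) (hk : 1 ≤ k) (r : ℕ → ℝ) (hr : ∀ m, 0 < r m)
    (hlim : Tendsto (fun m : ℕ => r m / m) atTop (nhds 1))
    (t : ℝ) (ht : 0 ≤ t) (x : ℝ) (hx : t ≤ x) :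
    Tendsto (fun m : ℕ =>
        (upperGamma k (x * r m ^ (-(1 : ℝ) / k)) / (Nat.factorial (k - 1) : ℝ)) ^ m /
          (upperGamma k (t * r m ^ (-(1 : ℝ) / k)) / (Nat.factorial (k - 1) : ℝ)) ^ m)
      atTop (nhds (Real.exp (-(x ^ k - t ^ k) / (Nat.factorial k : ℝ)))) := by
  obtain ⟨n, rfl⟩ := Nat.exists_eq_add_of_le' hk
  simp only [Nat.add_sub_cancel]
  have hε_nonneg (m : ℕ) : 0 ≤ r m ^ (-(1 : ℝ) / ((n + 1 : ℕ) : ℝ)) := rpow_nonneg (hr m).le _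
  have hε := tendsto_rpow_neg_one_div_natCast hlim n.succ_ne_zero
  have hmε := tendsto_natCast_mul_rpow_neg_one_div_natCast_pow hr hlim n.succ_ne_zero
  have hX := tendsto_upperGamma_succ_div_factorial_pow n hε_nonneg hε hmε (ht.trans hx)
  have hT := tendsto_upperGamma_succ_div_factorial_pow n hε_nonneg hε hmε ht
  rw [show -(x ^ (n + 1) - t ^ (n + 1)) / ((n + 1)! : ℝ) =
    -(x ^ (n + 1) / ((n + 1)! : ℝ)) - -(t ^ (n + 1) / ((n + 1)! : ℝ)) by ring, exp_sub]
  exact hX.div hT (exp_ne_zero _)
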